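/- arXiv:math/0211307 — 3 statements merged into one kernel-verified Lean document; each statement's English description precedes it below -/
import Mathlib

section
/- Let T > 0 and let W_i : ℝ → Ω → ℝ, i ∈ ℕ, be jointly measurable stochastic processes on a probability space (Ω, P) that are independent and identically distributed as processes and satisfy 0 ≤ W_i(s, ω) ≤ 1 for all s, ω. For t ∈ [0, T] set X_i^t = ∫₀^t W_i(s) ds and Z_n(t) = n^{-1/2} ∑_{i=1}^n (X_i^t − E[X_i^t]) (each Z_n has Lipschitz, hence continuous, sample paths). Then the sequence (Z_n) is stochastically equicontinuous on [0, T]: for every ε > 0, lim_{δ→0} limsup_{n→∞} P( sup_{s,t ∈ [0,T], |t−s| ≤ δ} |Z_n(t) − Z_n(s)| > ε ) = 0. (Tightness part of Theorem A.) -/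
/-!
Write `g n u = n^{-1/2} ∑_{i<n} (W i u - E[W i u])`. By Fubini, `Z n t = ∫₀ᵗ g n`, and by
independence `E[(g n u)²]` is the average of the variances of the `W i u`, hence at most `1/4`
(Popoviciu). For `|t - s| ≤ δ`, integrating the AM-GM inequality `|x| ≤ 1/(2√δ) + (√δ/2) x²`
over `[s, t]` gives `|Z n t - Z n s| ≤ (√δ/2) (1 + ∫₀ᵀ (g n)²)` for every path, so by Markov's
inequality the modulus of continuity of `Z n` exceeds `ε` with probability at most
`√δ (1 + T/4) / (2ε)`, uniformly in `n`.
-/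

open MeasureTheory ProbabilityTheory Filter Topology Function

noncomputable def modulusOfContinuity (F : ℝ → ℝ) (T δ : ℝ) : ℝ :=
  ⨆ (s : Set.Icc (0 : ℝ) T) (t : Set.Icc (0 : ℝ) T) (_ : |(t : ℝ) - (s : ℝ)| ≤ δ), |F t - F s|

lemma abs_le_inv_div_two_add_mul_sq {x c : ℝ} (hc : 0 < c) : |x| ≤ c⁻¹ / 2 + c / 2 * x ^ 2 := by
  have hsq : c⁻¹ / 2 + c / 2 * |x| ^ 2 - |x| = (c * |x| - 1) ^ 2 / (2 * c) := by
    field_simp; ring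
  rw [← sq_abs x, ← sub_nonneg, hsq]
  positivity

lemma intervalIntegrable_of_abs_le {f : ℝ → ℝ} (hf : Measurable f) {M : ℝ} (hM : ∀ u, |f u| ≤ M)
    (a b : ℝ) : IntervalIntegrable f volume a b :=
  intervalIntegrable_const.mono_fun' hf.aestronglyMeasurable (ae_of_all _ hM)

lemma abs_intervalIntegral_le_of_sub_le {f : ℝ → ℝ} {s t δ : ℝ} (hst : s ≤ t) (hδ : 0 < δ)
    (htδ : t - s ≤ δ) (hf2 : IntervalIntegrable (fun u => f u ^ 2) volume s t) :
    |∫ u in s..t, f u| ≤ √δ / 2 * (1 + ∫ u in s..t, f u ^ 2) := by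
  have hsδ : 0 < √δ := Real.sqrt_pos.2 hδ
  have hbound : IntervalIntegrable (fun u => (√δ)⁻¹ / 2 + √δ / 2 * f u ^ 2) volume s t :=
    intervalIntegrable_const.add (hf2.const_mul _)
  calc |∫ u in s..t, f u| ≤ ∫ u in s..t, |f u| := intervalIntegral.abs_integral_le_integral_abs hst
    _ ≤ ∫ u in s..t, ((√δ)⁻¹ / 2 + √δ / 2 * f u ^ 2) := by
        simp only [intervalIntegral.integral_of_le hst]
        exact integral_mono_of_nonneg (ae_of_all _ fun _ => abs_nonneg _) hbound.1
          (ae_of_all _ fun _ => abs_le_inv_div_two_add_mul_sq hsδ)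
    _ = (t - s) / (2 * √δ) + √δ / 2 * ∫ u in s..t, f u ^ 2 := by
        rw [intervalIntegral.integral_add intervalIntegrable_const (hf2.const_mul _),
          intervalIntegral.integral_const, intervalIntegral.integral_const_mul, smul_eq_mul]
        ring
    _ ≤ δ / (2 * √δ) + √δ / 2 * ∫ u in s..t, f u ^ 2 := by gcongr
    _ = √δ / 2 * (1 + ∫ u in s..t, f u ^ 2) := by
        have : δ / (2 * √δ) = √δ / 2 := by
          rw [div_eq_div_iff (by positivity) two_ne_zero]
          linear_combination -2 * Real.mul_self_sqrt hδ.le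
        rw [this]; ring

lemma modulusOfContinuity_le {F f : ℝ → ℝ} {T δ : ℝ} (hT : 0 ≤ T) (hδ : 0 < δ)
    (hF : ∀ t, F t = ∫ u in 0..t, f u) (hf : IntervalIntegrable f volume 0 T)
    (hf2 : IntervalIntegrable (fun u => f u ^ 2) volume 0 T) :
    modulusOfContinuity F T δ ≤ √δ / 2 * (1 + ∫ u in 0..T, f u ^ 2) := by
  have hsq : 0 ≤ ∫ u in 0..T, f u ^ 2 :=
    intervalIntegral.integral_nonneg hT fun _ _ => sq_nonneg _
  have hbound : 0 ≤ √δ / 2 * (1 + ∫ u in 0..T, f u ^ 2) := by positivity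
  have hsub : ∀ s t, s ∈ Set.Icc 0 T → t ∈ Set.Icc 0 T → s ≤ t → t - s ≤ δ →
      |F t - F s| ≤ √δ / 2 * (1 + ∫ u in 0..T, f u ^ 2) := by
    intro s t hs ht hst htδ
    have hst_sub : Set.uIcc s t ⊆ Set.uIcc 0 T := Set.uIcc_subset_uIcc
      (Set.mem_uIcc_of_le hs.1 hs.2) (Set.mem_uIcc_of_le ht.1 ht.2)
    rw [hF, hF, intervalIntegral.integral_interval_sub_left
      (hf.mono_set (Set.uIcc_subset_uIcc_left (Set.mem_uIcc_of_le ht.1 ht.2)))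
      (hf.mono_set (Set.uIcc_subset_uIcc_left (Set.mem_uIcc_of_le hs.1 hs.2)))]
    refine (abs_intervalIntegral_le_of_sub_le hst hδ htδ (hf2.mono_set hst_sub)).trans ?_
    gcongr
    exact intervalIntegral.integral_mono_interval hs.1 hst ht.2
      (ae_of_all _ fun _ => sq_nonneg _) hf2
  refine Real.iSup_le (fun s => Real.iSup_le (fun t => Real.iSup_le (fun hst => ?_) hbound)
    hbound) hbound
  rcases le_total (s : ℝ) t with h | h
  · exact hsub s t s.2 t.2 h ((le_abs_self _).trans hst)
  · rw [abs_sub_comm] at hst ⊢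
    exact hsub t s t.2 s.2 h ((le_abs_self _).trans hst)

section

variable {Ω : Type*} [MeasurableSpace Ω] {P : Measure Ω}

lemma measurable_integral_of_measurable_uncurry [SFinite P] {V : ℝ → Ω → ℝ}
    (hV : Measurable (uncurry V)) : Measurable fun u => ∫ ω, V u ω ∂P :=
  hV.stronglyMeasurable.integral_prod_right'.measurable

section Fubini

variable [IsFiniteMeasure P] {V : ℝ → Ω → ℝ}

lemma integrable_uncurry_of_abs_le (hV : Measurable (uncurry V)) {M : ℝ}
    (hM : ∀ u ω, |V u ω| ≤ M) (a b : ℝ) :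
    Integrable (uncurry V) ((volume.restrict (Set.uIoc a b)).prod P) := by
  have : IsFiniteMeasure (volume.restrict (Set.uIoc a b)) :=
    isFiniteMeasure_restrict.2 measure_Ioc_lt_top.ne
  exact (integrable_const (μ := (volume.restrict (Set.uIoc a b)).prod P) M).mono'
    hV.aestronglyMeasurable (ae_of_all _ fun p => hM p.1 p.2)

lemma integral_intervalIntegral_comm (hV : Measurable (uncurry V)) {M : ℝ}
    (hM : ∀ u ω, |V u ω| ≤ M) (a b : ℝ) :
    ∫ ω, (∫ u in a..b, V u ω) ∂P = ∫ u in a..b, ∫ ω, V u ω ∂P :=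
  (intervalIntegral_integral_swap (integrable_uncurry_of_abs_le hV hM a b)).symm

lemma integrable_intervalIntegral (hV : Measurable (uncurry V)) {M : ℝ}
    (hM : ∀ u ω, |V u ω| ≤ M) (a b : ℝ) :
    Integrable (fun ω => ∫ u in a..b, V u ω) P := by
  simp_rw [intervalIntegral.intervalIntegral_eq_integral_uIoc]
  exact (integrable_uncurry_of_abs_le (P := P) hV hM a b).integral_prod_right.smul
    (if a ≤ b then (1 : ℝ) else -1)

end Fubini

section NormalizedCenteredSum

variable {V : ℕ → ℝ → Ω → ℝ}

noncomputable def normalizedCenteredSum (P : Measure Ω) (V : ℕ → ℝ → Ω → ℝ) (n : ℕ) (u : ℝ)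
    (ω : Ω) : ℝ :=
  (√n)⁻¹ * ∑ i ∈ Finset.range n, (V i u ω - ∫ ω', V i u ω' ∂P)

lemma measurable_uncurry_normalizedCenteredSum [SFinite P] (hV : ∀ i, Measurable (uncurry (V i)))
    (n : ℕ) : Measurable (uncurry (normalizedCenteredSum P V n)) :=
  measurable_const.mul <| Finset.measurable_sum _ fun i _ =>
    (hV i).sub ((measurable_integral_of_measurable_uncurry (hV i)).comp measurable_fst)

lemma abs_normalizedCenteredSum_le {K : ℝ} (hK : ∀ i u ω, |V i u ω - ∫ ω', V i u ω' ∂P| ≤ K)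
    (n : ℕ) (u : ℝ) (ω : Ω) : |normalizedCenteredSum P V n u ω| ≤ (√n)⁻¹ * (n * K) := by
  rw [normalizedCenteredSum, abs_mul, abs_of_nonneg (by positivity)]
  gcongr
  exact (Finset.abs_sum_le_sum_abs _ _).trans (by
    simpa using Finset.sum_le_sum fun i (_ : i ∈ Finset.range n) => hK i u ω)

lemma normalizedCenteredSum_eq_intervalIntegral [IsProbabilityMeasure P]
    (hV : ∀ i, Measurable (uncurry (V i))) {M : ℝ} (hM : ∀ i u ω, |V i u ω| ≤ M)
    {X : ℕ → ℝ → Ω → ℝ} (hX : ∀ i t ω, X i t ω = ∫ u in (0 : ℝ)..t, V i u ω)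
    (n : ℕ) (t : ℝ) (ω : Ω) :
    normalizedCenteredSum P X n t ω = ∫ u in (0 : ℝ)..t, normalizedCenteredSum P V n u ω := by
  have hmean : ∀ i u, |∫ ω', V i u ω' ∂P| ≤ M := fun i u => by
    simpa using norm_integral_le_of_norm_le_const (μ := P) (f := V i u) (ae_of_all _ (hM i u))
  have hpath : ∀ i, IntervalIntegrable (fun u => V i u ω) volume 0 t := fun i =>
    intervalIntegrable_of_abs_le ((hV i).comp measurable_prodMk_right) (hM i · ω) 0 t
  have hmeanII : ∀ i, IntervalIntegrable (fun u => ∫ ω', V i u ω' ∂P) volume 0 t := fun i =>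
    intervalIntegrable_of_abs_le (measurable_integral_of_measurable_uncurry (hV i)) (hmean i) 0 t
  simp_rw [normalizedCenteredSum, hX, integral_intervalIntegral_comm (hV _) (hM _),
    intervalIntegral.integral_const_mul, intervalIntegral.integral_finsetSum
      fun i _ => (hpath i).sub (hmeanII i), intervalIntegral.integral_sub (hpath _) (hmeanII _)]

lemma integral_sq_normalizedCenteredSum_le [IsProbabilityMeasure P]
    {u v : ℝ} (hV : ∀ i, MemLp (V i u) 2 P)
    (hindep : Pairwise fun i j => IndepFun (V i u) (V j u) P)
    (hvar : ∀ i, variance (V i u) P ≤ v) (n : ℕ) :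
    ∫ ω, normalizedCenteredSum P V n u ω ^ 2 ∂P ≤ v := by
  set S := ∑ i ∈ Finset.range n, V i u with hS
  have hS_apply : ∀ ω, S ω = ∑ i ∈ Finset.range n, V i u ω := fun ω => by
    simp [hS, Finset.sum_apply]
  have hsum : ∀ ω, normalizedCenteredSum P V n u ω = (√n)⁻¹ * (S ω - ∫ ω', S ω' ∂P) := by
    intro ω
    simp_rw [normalizedCenteredSum, hS_apply,
      integral_finsetSum _ fun i _ => (hV i).integrable one_le_two, Finset.sum_sub_distrib]
  have hvarS : variance S P ≤ n * v := by
    rw [hS, IndepFun.variance_sum (fun i _ => hV i) fun i _ j _ hij => hindep hij]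
    simpa using Finset.sum_le_sum fun i (_ : i ∈ Finset.range n) => hvar i
  have hv : 0 ≤ v := (variance_nonneg _ _).trans (hvar 0)
  calc ∫ ω, normalizedCenteredSum P V n u ω ^ 2 ∂P
      = (n : ℝ)⁻¹ * variance S P := by
        rw [variance_eq_integral (memLp_finsetSum' _ fun i _ => hV i).aemeasurable,
          ← integral_const_mul]
        congr 1 with ω
        rw [hsum, mul_pow, inv_pow, Real.sq_sqrt n.cast_nonneg]
    _ ≤ (n : ℝ)⁻¹ * (n * v) := by gcongr
    _ ≤ v := by
        rcases n.eq_zero_or_pos with rfl | hn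
        · simpa using hv
        · rw [inv_mul_cancel_left₀ (by positivity)]

end NormalizedCenteredSum

section Equicontinuity

lemma measure_ge_le_ofReal_integral_div [IsFiniteMeasure P] {f : Ω → ℝ} (hf : 0 ≤ f)
    (hfi : Integrable f P) {c : ℝ} (hc : 0 < c) :
    P {ω | c ≤ f ω} ≤ ENNReal.ofReal ((∫ ω, f ω ∂P) / c) := by
  rw [← ofReal_measureReal (measure_ne_top P _)]
  gcongr
  rw [le_div_iff₀' hc]
  exact mul_meas_ge_le_integral_of_nonneg (ae_of_all _ hf) hfi c

variable [IsProbabilityMeasure P] {T σ : ℝ}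

lemma integral_intervalIntegral_sq_le {g : ℝ → Ω → ℝ} (hT : 0 ≤ T) (hg : Measurable (uncurry g))
    {M : ℝ} (hM : ∀ u ω, |g u ω| ≤ M) (hvar : ∀ u, ∫ ω, g u ω ^ 2 ∂P ≤ σ) :
    ∫ ω, (∫ u in (0 : ℝ)..T, g u ω ^ 2) ∂P ≤ σ * T := by
  have hM2 : ∀ u ω, |g u ω ^ 2| ≤ M ^ 2 := fun u ω => by
    rw [abs_pow]; exact pow_le_pow_left₀ (abs_nonneg _) (hM u ω) 2
  rw [integral_intervalIntegral_comm (hg.pow_const 2) hM2, intervalIntegral.integral_of_le hT]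
  calc ∫ u in Set.Ioc 0 T, ∫ ω, g u ω ^ 2 ∂P ≤ ∫ _ in Set.Ioc 0 T, σ :=
        integral_mono_of_nonneg (ae_of_all _ fun _ => integral_nonneg fun _ => sq_nonneg _)
          (integrableOn_const measure_Ioc_lt_top.ne) (ae_of_all _ hvar)
    _ = σ * T := by simp [mul_comm, hT]

lemma measure_modulusOfContinuity_gt_le {Z g : ℝ → Ω → ℝ} (hT : 0 ≤ T)
    (hg : Measurable (uncurry g)) {M : ℝ} (hM : ∀ u ω, |g u ω| ≤ M)
    (hZ : ∀ t ω, Z t ω = ∫ u in (0 : ℝ)..t, g u ω) (hvar : ∀ u, ∫ ω, g u ω ^ 2 ∂P ≤ σ)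
    {ε δ : ℝ} (hε : 0 < ε) (hδ : 0 < δ) :
    P {ω | modulusOfContinuity (fun t => Z t ω) T δ > ε}
      ≤ ENNReal.ofReal (√δ * (1 + σ * T) / (2 * ε)) := by
  set Y : Ω → ℝ := fun ω => ∫ u in (0 : ℝ)..T, g u ω ^ 2
  have hM2 : ∀ u ω, |g u ω ^ 2| ≤ M ^ 2 := fun u ω => by
    rw [abs_pow]; exact pow_le_pow_left₀ (abs_nonneg _) (hM u ω) 2
  have hY_nonneg : ∀ ω, 0 ≤ Y ω := fun ω =>
    intervalIntegral.integral_nonneg hT fun _ _ => sq_nonneg _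
  have hsδ : 0 < √δ := Real.sqrt_pos.2 hδ
  have hsubset : {ω | modulusOfContinuity (fun t => Z t ω) T δ > ε}
      ⊆ {ω | 2 * ε / √δ ≤ 1 + Y ω} := by
    intro ω hω
    have hpath := modulusOfContinuity_le hT hδ (hZ · ω)
      (intervalIntegrable_of_abs_le (hg.comp measurable_prodMk_right) (hM · ω) 0 T)
      (intervalIntegrable_of_abs_le ((hg.pow_const 2).comp measurable_prodMk_right)
        (hM2 · ω) 0 T)
    rw [Set.mem_ofPred_eq, div_le_iff₀ hsδ]
    linarith [hω.trans_le hpath]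
  have hY_int : Integrable Y P := integrable_intervalIntegral (hg.pow_const 2) hM2 0 T
  have hEY : ∫ ω, (1 + Y ω) ∂P ≤ 1 + σ * T := by
    rw [integral_add (integrable_const 1) hY_int, integral_const, smul_eq_mul, probReal_univ,
      one_mul]
    linarith [integral_intervalIntegral_sq_le hT hg hM hvar]
  calc P {ω | modulusOfContinuity (fun t => Z t ω) T δ > ε}
      ≤ P {ω | 2 * ε / √δ ≤ 1 + Y ω} := measure_mono hsubset
    _ ≤ ENNReal.ofReal ((∫ ω, (1 + Y ω) ∂P) / (2 * ε / √δ)) :=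
        measure_ge_le_ofReal_integral_div (fun ω => add_nonneg zero_le_one (hY_nonneg ω))
          ((integrable_const 1).add hY_int) (by positivity)
    _ ≤ ENNReal.ofReal (√δ * (1 + σ * T) / (2 * ε)) := by
        rw [div_div_eq_mul_div, mul_comm]
        gcongr

theorem tendsto_limsup_measure_modulusOfContinuity_gt {Z g : ℕ → ℝ → Ω → ℝ} (hT : 0 ≤ T)
    (hg : ∀ n, Measurable (uncurry (g n))) (hbdd : ∀ n, ∃ M, ∀ u ω, |g n u ω| ≤ M)
    (hZ : ∀ n t ω, Z n t ω = ∫ u in (0 : ℝ)..t, g n u ω)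
    (hvar : ∀ n u, ∫ ω, g n u ω ^ 2 ∂P ≤ σ) {ε : ℝ} (hε : 0 < ε) :
    Tendsto (fun δ : ℝ => limsup (fun n =>
        P {ω | modulusOfContinuity (fun t => Z n t ω) T δ > ε}) atTop) (𝓝[>] 0) (𝓝 0) := by
  have hbound : Tendsto (fun δ : ℝ => ENNReal.ofReal (√δ * (1 + σ * T) / (2 * ε)))
      (𝓝[>] 0) (𝓝 0) := by
    have hcont : Continuous fun δ : ℝ => ENNReal.ofReal (√δ * (1 + σ * T) / (2 * ε)) :=
      ENNReal.continuous_ofReal.comp (by fun_prop)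
    simpa using (hcont.tendsto 0).mono_left nhdsWithin_le_nhds
  refine tendsto_of_tendsto_of_tendsto_of_le_of_le' tendsto_const_nhds hbound
    (Eventually.of_forall fun _ => bot_le) ?_
  filter_upwards [self_mem_nhdsWithin] with δ hδ
  refine limsup_le_of_le (by isBoundedDefault) (Eventually.of_forall fun n => ?_)
  obtain ⟨M, hM⟩ := hbdd n
  exact measure_modulusOfContinuity_gt_le hT (hg n) hM (hZ n) (hvar n) hε hδ

end Equicontinuity

end

theorem stmt_1_general {Ω : Type*} [MeasurableSpace Ω] (P : Measure Ω) [IsProbabilityMeasure P]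
    (T : ℝ) (hT : 0 < T)
    (W : ℕ → ℝ → Ω → ℝ)
    (hmeas : ∀ i, Measurable (Function.uncurry (W i)))
    (hbdd : ∀ i s ω, W i s ω ∈ Set.Icc (0 : ℝ) 1)
    (hindep : iIndepFun (m := fun _ => (inferInstance : MeasurableSpace (ℝ → ℝ)))
      (fun i ω => fun s => W i s ω) P)
    (X : ℕ → ℝ → Ω → ℝ)
    (hX : ∀ i t ω, X i t ω = ∫ s in (0 : ℝ)..t, W i s ω)
    (Z : ℕ → ℝ → Ω → ℝ)
    (hZ : ∀ n t ω, Z n t ω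
      = (Real.sqrt n)⁻¹ * ∑ i ∈ Finset.range n, (X i t ω - ∫ ω', X i t ω' ∂P)) :
    ∀ ε > (0 : ℝ),
      Tendsto (fun δ : ℝ =>
          Filter.limsup (fun n =>
            P {ω | (⨆ (s : Set.Icc (0 : ℝ) T) (t : Set.Icc (0 : ℝ) T)
                (_ : |(t : ℝ) - (s : ℝ)| ≤ δ), |Z n t ω - Z n s ω|) > ε}) atTop)
        (𝓝[>] 0) (𝓝 0) := by
  intro ε hε
  have hW : ∀ i u ω, |W i u ω| ≤ 1 := fun i u ω =>
    abs_le.2 ⟨by linarith [(hbdd i u ω).1], (hbdd i u ω).2⟩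
  have hL2 : ∀ i u, MemLp (W i u) 2 P := fun i u =>
    MemLp.of_bound ((hmeas i).comp measurable_prodMk_left).aestronglyMeasurable 1
      (ae_of_all _ (hW i u))
  have hmean : ∀ i u, ∫ ω, W i u ω ∂P ∈ Set.Icc (0 : ℝ) 1 := fun i u =>
    (convex_Icc 0 1).integral_mem isClosed_Icc (ae_of_all _ (hbdd i u))
      ((hL2 i u).integrable one_le_two)
  have hcentered : ∀ i u ω, |W i u ω - ∫ ω', W i u ω' ∂P| ≤ 1 := fun i u ω =>
    abs_sub_le_of_nonneg_of_le (hbdd i u ω).1 (hbdd i u ω).2 (hmean i u).1 (hmean i u).2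
  have hvar : ∀ n u, ∫ ω, normalizedCenteredSum P W n u ω ^ 2 ∂P ≤ ((1 - 0) / 2) ^ 2 :=
    fun n u => integral_sq_normalizedCenteredSum_le (hL2 · u)
      (fun i j hij => (hindep.comp (fun _ φ => φ u) fun _ => measurable_pi_apply u).indepFun hij)
      (fun i => variance_le_sq_of_bounded (ae_of_all _ (hbdd i u))
        ((hL2 i u).aestronglyMeasurable.aemeasurable)) n
  exact tendsto_limsup_measure_modulusOfContinuity_gt hT.le
    (measurable_uncurry_normalizedCenteredSum hmeas)
    (fun n => ⟨_, abs_normalizedCenteredSum_le hcentered n⟩)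
    (fun n t ω => (hZ n t ω).trans (normalizedCenteredSum_eq_intervalIntegral hmeas hW hX n t ω))
    hvar hε

/-- tightness part of Theorem A.
With `W i` i.i.d. `[0,1]`-valued processes, `X i t = ∫₀ᵗ W i s ds` and
`Z n t = n^{-1/2} ∑_{i<n} (X i t − E[X i t])`, the sequence `(Z n)` is stochastically
equicontinuous on `[0,T]`: for every `ε > 0`,
`lim_{δ→0⁺} limsup_{n→∞} P(sup_{s,t∈[0,T], |t−s|≤δ} |Z n t − Z n s| > ε) = 0`. -/
theorem stmt_1 {Ω : Type*} [MeasurableSpace Ω] (P : Measure Ω) [IsProbabilityMeasure P]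
    (T : ℝ) (hT : 0 < T)
    (W : ℕ → ℝ → Ω → ℝ)
    (hmeas : ∀ i, Measurable (Function.uncurry (W i)))
    (hbdd : ∀ i s ω, W i s ω ∈ Set.Icc (0 : ℝ) 1)
    (hindep : iIndepFun (m := fun _ => (inferInstance : MeasurableSpace (ℝ → ℝ)))
      (fun i ω => fun s => W i s ω) P)
    (hident : ∀ i, IdentDistrib (fun ω => fun s => W i s ω) (fun ω => fun s => W 0 s ω) P P)
    (X : ℕ → ℝ → Ω → ℝ)
    (hX : ∀ i t ω, X i t ω = ∫ s in (0 : ℝ)..t, W i s ω)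
    (Z : ℕ → ℝ → Ω → ℝ)
    (hZ : ∀ n t ω, Z n t ω
      = (Real.sqrt n)⁻¹ * ∑ i ∈ Finset.range n, (X i t ω - ∫ ω', X i t ω' ∂P)) :
    ∀ ε > (0 : ℝ),
      Tendsto (fun δ : ℝ =>
          Filter.limsup (fun n =>
            P {ω | (⨆ (s : Set.Icc (0 : ℝ) T) (t : Set.Icc (0 : ℝ) T)
                (_ : |(t : ℝ) - (s : ℝ)| ≤ δ), |Z n t ω - Z n s ω|) > ε}) atTop)
        (𝓝[>] 0) (𝓝 0) :=
  stmt_1_general P T hT W hmeas hbdd hindep X hX Z hZ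
end

section
/- Let T ≥ 0, a > 0, ε > 0 and h > 0 with a·h ≤ ε/8. Let f : [0, T] → ℝ be nondecreasing and set Z(t) = f(t) − a t. Let Λ = { i h : i ∈ ℕ } ∩ [0, T'] be a grid of spacing h covering [0, T] (T' ≥ T), and for t ∈ [0, T] let φ₁(t) be the largest grid point ≤ t and φ₂(t) the smallest grid point ≥ t. Then for all s, t ∈ [0, T]: |Z(t) − Z(s)| ≤ |Z(φ₂(t)) − Z(φ₁(s))| + |Z(φ₂(s)) − Z(φ₁(t))| + ε/2. -/
open Set

/-- deterministic discretization inequality; Step 1 of Theorems B and C.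
`f` is nondecreasing on `[0,T']`, `Z t = f t − a t`, the grid has spacing `h` with
`a·h ≤ ε/8`, and the grid covers `[0,T]` (i.e. `φ₂ t ≤ T'` for `t ∈ [0,T]`), where
`φ₁ t = h⌊t/h⌋` is the largest grid point `≤ t` and `φ₂ t = h⌈t/h⌉` the smallest grid
point `≥ t`.  Then `|Z t − Z s| ≤ |Z (φ₂ t) − Z (φ₁ s)| + |Z (φ₂ s) − Z (φ₁ t)| + ε/2`. -/
theorem stmt_3 (T T' a ε h : ℝ) (hT : 0 ≤ T) (hTT' : T ≤ T')
    (ha : 0 < a) (hε : 0 < ε) (hh : 0 < h) (hah : a * h ≤ ε / 8)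
    (f : ℝ → ℝ) (hf : MonotoneOn f (Icc 0 T'))
    (φ₁ φ₂ : ℝ → ℝ)
    (hφ₁ : ∀ t, φ₁ t = h * (⌊t / h⌋ : ℤ))
    (hφ₂ : ∀ t, φ₂ t = h * (⌈t / h⌉ : ℤ))
    (hcov : ∀ t ∈ Icc (0 : ℝ) T, φ₂ t ≤ T')
    (Z : ℝ → ℝ) (hZ : ∀ t, Z t = f t - a * t) :
    ∀ s ∈ Icc (0 : ℝ) T, ∀ t ∈ Icc (0 : ℝ) T,
      |Z t - Z s| ≤ |Z (φ₂ t) - Z (φ₁ s)| + |Z (φ₂ s) - Z (φ₁ t)| + ε / 2 := by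
  have h1 : ∀ u, φ₁ u ≤ u := by
    intro u
    rw [hφ₁]
    have := Int.floor_le (u / h)
    calc h * (⌊u / h⌋ : ℤ) ≤ h * (u / h) := by
          exact mul_le_mul_of_nonneg_left this hh.le
      _ = u := by field_simp
  have h2 : ∀ u, u ≤ φ₂ u := by
    intro u
    rw [hφ₂]
    have := Int.le_ceil (u / h)
    calc u = h * (u / h) := by field_simp
      _ ≤ h * (⌈u / h⌉ : ℤ) := mul_le_mul_of_nonneg_left this hh.le
  have h3 : ∀ u, φ₂ u ≤ u + h := by
    intro u
    rw [hφ₂]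
    have := (Int.ceil_lt_add_one (u / h)).le
    calc h * (⌈u / h⌉ : ℤ) ≤ h * (u / h + 1) := mul_le_mul_of_nonneg_left this hh.le
      _ = u + h := by field_simp
  have h4 : ∀ u, u - h ≤ φ₁ u := by
    intro u
    rw [hφ₁]
    have := (Int.sub_one_lt_floor (u / h)).le
    calc u - h = h * (u / h - 1) := by field_simp
      _ ≤ h * (⌊u / h⌋ : ℤ) := mul_le_mul_of_nonneg_left this hh.le
  have h5 : ∀ u, 0 ≤ u → 0 ≤ φ₁ u := by
    intro u hu
    rw [hφ₁]
    have : (0 : ℤ) ≤ ⌊u / h⌋ := Int.floor_nonneg.2 (div_nonneg hu hh.le)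
    positivity
  have key : ∀ u ∈ Icc (0 : ℝ) T, ∀ v ∈ Icc (0 : ℝ) T,
      Z v - Z u ≤ |Z (φ₂ v) - Z (φ₁ u)| + ε / 4 := by
    intro u hu v hv
    have memv : v ∈ Icc (0 : ℝ) T' := ⟨hv.1, hv.2.trans hTT'⟩
    have memφ₂v : φ₂ v ∈ Icc (0 : ℝ) T' := ⟨hv.1.trans (h2 v), hcov v hv⟩
    have memu : u ∈ Icc (0 : ℝ) T' := ⟨hu.1, hu.2.trans hTT'⟩
    have memφ₁u : φ₁ u ∈ Icc (0 : ℝ) T' := ⟨h5 u hu.1, (h1 u).trans memu.2⟩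
    have A := hf memv memφ₂v (h2 v)
    have B := hf memφ₁u memu (h1 u)
    have C1 : a * φ₂ v ≤ a * (v + h) := mul_le_mul_of_nonneg_left (h3 v) ha.le
    have C2 : a * (u - h) ≤ a * φ₁ u := mul_le_mul_of_nonneg_left (h4 u) ha.le
    have D : Z v - Z u ≤ Z (φ₂ v) - Z (φ₁ u) + ε / 4 := by
      simp only [hZ]; nlinarith
    exact D.trans (by linarith [le_abs_self (Z (φ₂ v) - Z (φ₁ u))])
  intro s hs t ht
  have K1 := key s hs t ht
  have K2 := key t ht s hs
  have N1 := abs_nonneg (Z (φ₂ t) - Z (φ₁ s))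
  have N2 := abs_nonneg (Z (φ₂ s) - Z (φ₁ t))
  rcases abs_cases (Z t - Z s) with ⟨he, _⟩ | ⟨he, _⟩ <;> rw [he] <;> linarith
end

section
/- Let p ∈ (1, 2), C < ∞ and q > 1/p. Let Y_1, Y_2, … be independent, identically distributed real random variables with E|Y_1| < ∞ and sup_{t ≥ 1} t^p · P(|Y_1| > t) ≤ C, and let (M_n) be a sequence with M_n ≥ n^q for all n. Then n^{-1/p} ∑_{i=1}^n ( Y_i · 1_{|Y_i| ≥ M_n} − E[ Y_1 · 1_{|Y_1| ≥ M_n} ] ) → 0 in probability as n → ∞. -/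
/-!
The truncated-away part is controlled in `L¹`. A tail bound `t ^ p * P(|Y| > t) ≤ C` gives a
finite `r`-th moment for every `r < p`, and on `{|x| ≥ M}` one has `|x| ≤ M ^ (1 - r) * |x| ^ r`.
Hence the normalized centered sum has `L¹` norm at most
`2 n ^ (1 - 1/p) M_n ^ (1 - r) E|Y|^r ≤ 2 n ^ (1 - 1/p - q (r - 1)) E|Y|^r`, and for `r` close
enough to `p` this exponent is negative because `q > 1/p`. Convergence in `L¹` implies
convergence in probability.
-/

open MeasureTheory ProbabilityTheory Filter Topology Set

noncomputable def tailPart (M x : ℝ) : ℝ := if M ≤ |x| then x else 0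

@[fun_prop]
theorem measurable_tailPart (M : ℝ) : Measurable (tailPart M) :=
  Measurable.ite (measurableSet_le measurable_const measurable_abs) measurable_id measurable_const

theorem abs_tailPart_le {M r : ℝ} (hM : 0 < M) (hr : 1 ≤ r) (x : ℝ) :
    |tailPart M x| ≤ M ^ (1 - r) * |x| ^ r := by
  unfold tailPart
  split_ifs with hx
  · have hx0 : 0 < |x| := hM.trans_le hx
    calc |x| = |x| ^ (1 - r) * |x| ^ r := by
          rw [← Real.rpow_add hx0, sub_add_cancel, Real.rpow_one]
      _ ≤ M ^ (1 - r) * |x| ^ r :=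
          mul_le_mul_of_nonneg_right (Real.rpow_le_rpow_of_nonpos hM hx (by linarith))
            (by positivity)
  · rw [abs_zero]
    positivity

section

variable {Ω : Type*} [MeasurableSpace Ω] {P : Measure Ω}

theorem lintegral_ofReal_abs_rpow_lt_top_of_tail_le [IsProbabilityMeasure P]
    {f : Ω → ℝ} {p r C : ℝ} (hf : AEMeasurable f P)
    (htail : ∀ t : ℝ, 1 ≤ t → t ^ p * (P {ω | |f ω| > t}).toReal ≤ C)
    (hr : 1 ≤ r) (hrp : r < p) :
    ∫⁻ ω, ENNReal.ofReal (|f ω| ^ r) ∂P < ⊤ := by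
  -- Layer cake `E|f|^r = r ∫ t^(r-1) P(|f| > t) dt`; bound the probability by `1` on `(0, 1]`
  -- and by `C t^(-p)` on `(1, ∞)`.
  rw [lintegral_rpow_eq_lintegral_meas_lt_mul P (.of_forall fun ω => abs_nonneg _) hf.abs
      (by linarith)]
  refine ENNReal.mul_lt_top ENNReal.ofReal_lt_top ?_
  rw [← Ioc_union_Ioi_eq_Ioi zero_le_one,
    lintegral_union measurableSet_Ioi (Ioc_disjoint_Ioi le_rfl)]
  refine ENNReal.add_lt_top.mpr ⟨?_, ?_⟩
  · calc ∫⁻ t in Ioc (0:ℝ) 1, P {ω | t < |f ω|} * ENNReal.ofReal (t ^ (r - 1))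
        ≤ ∫⁻ _ in Ioc (0:ℝ) 1, 1 := by
          refine setLIntegral_mono measurable_one fun t ht => mul_le_one' prob_le_one ?_
          exact ENNReal.ofReal_le_one.mpr (Real.rpow_le_one ht.1.le ht.2 (by linarith))
      _ < ⊤ := by simp
  · calc ∫⁻ t in Ioi (1:ℝ), P {ω | t < |f ω|} * ENNReal.ofReal (t ^ (r - 1))
        ≤ ∫⁻ t in Ioi (1:ℝ), ENNReal.ofReal (C * t ^ (r - 1 - p)) := by
          refine setLIntegral_mono (by fun_prop) fun t (ht : 1 < t) => ?_
          have ht0 : 0 < t := by linarith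
          have hPt : (P {ω | t < |f ω|}).toReal ≤ C * t ^ (-p) := by
            rw [Real.rpow_neg ht0.le, mul_comm C, ← div_eq_inv_mul,
              le_div_iff₀ (Real.rpow_pos_of_pos ht0 p), mul_comm]
            exact htail t ht.le
          calc P {ω | t < |f ω|} * ENNReal.ofReal (t ^ (r - 1))
              ≤ ENNReal.ofReal (C * t ^ (-p)) * ENNReal.ofReal (t ^ (r - 1)) := by
                gcongr
                exact ENNReal.le_ofReal_iff_toReal_le (measure_ne_top P _)
                  (le_trans ENNReal.toReal_nonneg hPt) |>.mpr hPt
            _ = ENNReal.ofReal (C * t ^ (r - 1 - p)) := by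
                rw [← ENNReal.ofReal_mul (le_trans ENNReal.toReal_nonneg hPt), mul_assoc,
                  ← Real.rpow_add ht0, neg_add_eq_sub]
      _ < ⊤ := ((integrableOn_Ioi_rpow_of_lt (by linarith) one_pos).const_mul C).lintegral_lt_top

theorem eLpNorm_one_tailPart_comp_le {f : Ω → ℝ} {M r : ℝ} (hM : 0 < M) (hr : 1 ≤ r) :
    eLpNorm (fun ω => tailPart M (f ω)) 1 P
      ≤ ENNReal.ofReal (M ^ (1 - r)) * ∫⁻ ω, ENNReal.ofReal (|f ω| ^ r) ∂P := by
  rw [eLpNorm_one_eq_lintegral_enorm, ← lintegral_const_mul' _ _ ENNReal.ofReal_ne_top]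
  refine lintegral_mono fun ω => ?_
  rw [Real.enorm_eq_ofReal_abs, ← ENNReal.ofReal_mul (by positivity)]
  exact ENNReal.ofReal_le_ofReal (abs_tailPart_le hM hr (f ω))

theorem eLpNorm_one_sum_sub_integral_le {E : Type*} [NormedAddCommGroup E] [NormedSpace ℝ E]
    [MeasurableSpace E] [BorelSpace E] [SecondCountableTopology E] [IsProbabilityMeasure P]
    {X : ℕ → Ω → E} (hident : ∀ i, IdentDistrib (X i) (X 0) P P) (n : ℕ) :
    eLpNorm (fun ω => ∑ i ∈ Finset.range n, (X i ω - ∫ ω', X 0 ω' ∂P)) 1 P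
      ≤ 2 * n * eLpNorm (X 0) 1 P := by
  set m := ∫ ω', X 0 ω' ∂P
  have hsum : (fun ω => ∑ i ∈ Finset.range n, (X i ω - m))
      = ∑ i ∈ Finset.range n, (X i - fun _ => m) := by
    ext ω
    simp [Finset.sum_apply]
  have hterm : ∀ i, eLpNorm (X i - fun _ => m) 1 P ≤ 2 * eLpNorm (X 0) 1 P := fun i => by
    calc eLpNorm (X i - fun _ => m) 1 P ≤ eLpNorm (X i) 1 P + eLpNorm (fun _ => m) 1 P :=
          eLpNorm_sub_le (hident i).aemeasurable_fst.aestronglyMeasurable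
            aestronglyMeasurable_const le_rfl
      _ ≤ eLpNorm (X 0) 1 P + eLpNorm (X 0) 1 P := by
          rw [(hident i).eLpNorm_eq, eLpNorm_const _ one_ne_zero (NeZero.ne P), measure_univ,
            ENNReal.one_rpow, mul_one, eLpNorm_one_eq_lintegral_enorm]
          gcongr
          exact enorm_integral_le_lintegral_enorm _
      _ = 2 * eLpNorm (X 0) 1 P := (two_mul _).symm
  calc eLpNorm (fun ω => ∑ i ∈ Finset.range n, (X i ω - m)) 1 P
      ≤ ∑ i ∈ Finset.range n, eLpNorm (X i - fun _ => m) 1 P := by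
        rw [hsum]
        exact eLpNorm_sum_le (fun i _ => (hident i).aemeasurable_fst.aestronglyMeasurable.sub
          aestronglyMeasurable_const) le_rfl
    _ ≤ ∑ _i ∈ Finset.range n, 2 * eLpNorm (X 0) 1 P := Finset.sum_le_sum fun i _ => hterm i
    _ = 2 * n * eLpNorm (X 0) 1 P := by
        rw [Finset.sum_const, Finset.card_range, nsmul_eq_mul]
        ring

theorem eLpNorm_one_const_mul_sum_tailPart_sub_le [IsProbabilityMeasure P] {Y : ℕ → Ω → ℝ}
    (hident : ∀ i, IdentDistrib (Y i) (Y 0) P P) {M r c : ℝ} (hM : 0 < M) (hr : 1 ≤ r)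
    (hc : 0 ≤ c) (n : ℕ) :
    eLpNorm (fun ω => c * ∑ i ∈ Finset.range n,
        (tailPart M (Y i ω) - ∫ ω', tailPart M (Y 0 ω') ∂P)) 1 P
      ≤ 2 * (∫⁻ ω, ENNReal.ofReal (|Y 0 ω| ^ r) ∂P)
        * ENNReal.ofReal (c * n * M ^ (1 - r)) := by
  have hidentTail : ∀ i, IdentDistrib (fun ω => tailPart M (Y i ω))
      (fun ω => tailPart M (Y 0 ω)) P P := fun i => (hident i).comp (measurable_tailPart M)
  calc eLpNorm (fun ω => c * ∑ i ∈ Finset.range n,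
        (tailPart M (Y i ω) - ∫ ω', tailPart M (Y 0 ω') ∂P)) 1 P
      = ‖c‖ₑ * eLpNorm (fun ω => ∑ i ∈ Finset.range n,
          (tailPart M (Y i ω) - ∫ ω', tailPart M (Y 0 ω') ∂P)) 1 P :=
        eLpNorm_const_smul c _ 1 P
    _ ≤ ENNReal.ofReal c * (2 * n * (ENNReal.ofReal (M ^ (1 - r))
          * ∫⁻ ω, ENNReal.ofReal (|Y 0 ω| ^ r) ∂P)) := by
        rw [Real.enorm_of_nonneg hc]
        gcongr
        exact (eLpNorm_one_sum_sub_integral_le hidentTail n).trans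
          (by gcongr; exact eLpNorm_one_tailPart_comp_le hM hr)
    _ = _ := by
        rw [ENNReal.ofReal_mul (by positivity), ENNReal.ofReal_mul hc, ENNReal.ofReal_natCast]
        ring

end

theorem tendsto_rpow_inv_mul_mul_rpow_atTop_zero {p q r : ℝ} {M : ℕ → ℝ}
    (hM : ∀ n : ℕ, (n : ℝ) ^ q ≤ M n) (hr : 1 ≤ r) (hexp : 1 - 1 / p < q * (r - 1)) :
    Tendsto (fun n : ℕ => ((n : ℝ) ^ (1 / p))⁻¹ * n * M n ^ (1 - r)) atTop (𝓝 0) := by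
  have hdecay : Tendsto (fun n : ℕ => (n : ℝ) ^ (1 - 1 / p + q * (1 - r))) atTop (𝓝 0) :=
    (tendsto_rpow_neg_atTop (y := q * (r - 1) - (1 - 1 / p)) (by linarith)).comp
      tendsto_natCast_atTop_atTop |>.congr fun n => by
        simp only [Function.comp_apply]
        ring_nf
  have hpos : ∀ᶠ n : ℕ in atTop, (0 : ℝ) < n := eventually_gt_atTop 0 |>.mono fun n hn => by
    exact_mod_cast hn
  refine squeeze_zero' (hpos.mono fun n hn0 => ?_) ?_ hdecay
  · have := (Real.rpow_pos_of_pos hn0 q).trans_le (hM n)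
    positivity
  filter_upwards [hpos] with n hn0
  calc ((n : ℝ) ^ (1 / p))⁻¹ * n * M n ^ (1 - r)
      ≤ ((n : ℝ) ^ (1 / p))⁻¹ * n * ((n : ℝ) ^ q) ^ (1 - r) :=
        mul_le_mul_of_nonneg_left
          (Real.rpow_le_rpow_of_nonpos (by positivity) (hM n) (by linarith)) (by positivity)
    _ = (n : ℝ) ^ (1 - 1 / p + q * (1 - r)) := by
        rw [← Real.rpow_neg hn0.le, ← Real.rpow_mul hn0.le, Real.rpow_add hn0,
          Real.rpow_sub hn0, Real.rpow_one, Real.rpow_neg hn0.le]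
        ring

theorem exists_exponent_one_sub_inv_lt_mul_sub_one {p q : ℝ} (hp : 1 < p) (hq : 1 / p < q) :
    ∃ r, 1 ≤ r ∧ r < p ∧ 1 - 1 / p < q * (r - 1) := by
  have hp0 : 0 < p := by linarith
  have hq0 : 0 < q := lt_trans (by positivity) hq
  have hgap : (1 - 1 / p) / q < p - 1 := by
    rw [div_lt_iff₀ hq0]
    nlinarith [mul_one_div_cancel hp0.ne']
  obtain ⟨r, hr_lower, hrp⟩ := exists_between (by linarith : 1 + (1 - 1 / p) / q < p)
  have hnonneg : 0 ≤ (1 - 1 / p) / q :=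
    div_nonneg (by linarith [(div_lt_one hp0).mpr hp]) hq0.le
  refine ⟨r, by linarith, hrp, ?_⟩
  rw [← div_lt_iff₀' hq0]
  linarith

theorem stmt_11_general {Ω : Type*} [MeasurableSpace Ω] (P : Measure Ω) [IsProbabilityMeasure P]
    (p q C : ℝ) (hp : p ∈ Set.Ioo (1 : ℝ) 2) (hq : 1 / p < q)
    (Y : ℕ → Ω → ℝ)
    (hident : ∀ i, IdentDistrib (Y i) (Y 0) P P)
    (htail : ∀ t : ℝ, 1 ≤ t → t ^ p * (P {ω | |Y 0 ω| > t}).toReal ≤ C)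
    (M : ℕ → ℝ) (hM : ∀ n : ℕ, (n : ℝ) ^ q ≤ M n) :
    TendstoInMeasure P
      (fun (n : ℕ) ω => ((n : ℝ) ^ (1 / p))⁻¹ *
        ∑ i ∈ Finset.range n,
          ((if M n ≤ |Y i ω| then Y i ω else 0)
            - ∫ ω', (if M n ≤ |Y 0 ω'| then Y 0 ω' else 0) ∂P))
      atTop (fun _ => 0) := by
  obtain ⟨r, hr, hrp, hexp⟩ := exists_exponent_one_sub_inv_lt_mul_sub_one hp.1 hq
  set K := ∫⁻ ω, ENNReal.ofReal (|Y 0 ω| ^ r) ∂P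
  have hK : K ≠ ⊤ :=
    (lintegral_ofReal_abs_rpow_lt_top_of_tail_le (hident 0).aemeasurable_fst htail hr hrp).ne
  have hY : ∀ i, AEMeasurable (Y i) P := fun i => (hident i).aemeasurable_fst
  refine tendstoInMeasure_of_tendsto_eLpNorm one_ne_zero (fun n => ?_) aestronglyMeasurable_const ?_
  · show AEStronglyMeasurable (fun ω => ((n : ℝ) ^ (1 / p))⁻¹ * ∑ i ∈ Finset.range n,
      (tailPart (M n) (Y i ω) - ∫ ω', tailPart (M n) (Y 0 ω') ∂P)) P
    exact AEMeasurable.aestronglyMeasurable (by fun_prop)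
  have hlim := ENNReal.Tendsto.const_mul (a := 2 * K)
    (ENNReal.tendsto_ofReal (tendsto_rpow_inv_mul_mul_rpow_atTop_zero hM hr hexp))
    (.inr (by finiteness))
  rw [ENNReal.ofReal_zero, mul_zero] at hlim
  refine tendsto_of_tendsto_of_tendsto_of_le_of_le' tendsto_const_nhds hlim
    (.of_forall fun _ => zero_le) ?_
  filter_upwards [eventually_gt_atTop 0] with n hn
  have hMn : 0 < M n := (Real.rpow_pos_of_pos (Nat.cast_pos.mpr hn) q).trans_le (hM n)
  rw [show (fun _ : Ω => (0 : ℝ)) = 0 from rfl, sub_zero]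
  exact eLpNorm_one_const_mul_sum_tailPart_sub_le hident hMn hr (by positivity) n

/-- negligibility of the truncated-away part; Theorem C(ii).
For i.i.d. integrable `Y i` with tail `t^p P(|Y| > t) ≤ C` (`p ∈ (1,2)`) and
`M n ≥ n^q` with `q > 1/p`, one has
`n^{-1/p} ∑_{i<n} (Y i · 1_{|Y i| ≥ M n} − E[Y · 1_{|Y| ≥ M n}]) → 0` in probability. -/
theorem stmt_11 {Ω : Type*} [MeasurableSpace Ω] (P : Measure Ω) [IsProbabilityMeasure P]
    (p q C : ℝ) (hp : p ∈ Set.Ioo (1 : ℝ) 2) (hq : 1 / p < q)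
    (Y : ℕ → Ω → ℝ)
    (hmeas : ∀ i, Measurable (Y i))
    (hint : Integrable (Y 0) P)
    (hindep : iIndepFun Y P)
    (hident : ∀ i, IdentDistrib (Y i) (Y 0) P P)
    (htail : ∀ t : ℝ, 1 ≤ t → t ^ p * (P {ω | |Y 0 ω| > t}).toReal ≤ C)
    (M : ℕ → ℝ) (hM : ∀ n : ℕ, (n : ℝ) ^ q ≤ M n) :
    TendstoInMeasure P
      (fun (n : ℕ) ω => ((n : ℝ) ^ (1 / p))⁻¹ *
        ∑ i ∈ Finset.range n,
          ((if M n ≤ |Y i ω| then Y i ω else 0)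
            - ∫ ω', (if M n ≤ |Y 0 ω'| then Y 0 ω' else 0) ∂P))
      atTop (fun _ => 0) :=
  stmt_11_general P p q C hp hq Y hident htail M hM
end
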